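/- arXiv:math/9712291 — 5 statements merged into one kernel-verified Lean document; each statement's English description precedes it below -/
import Mathlib

section
/- In a complete lattice where meet with α distributes over directed suprema, if δ and ε are elements with β ≤ δ, γ ≤ ε, and α ⊓ δ = α ⊓ ε, then β_ω ≤ δ and γ_ω ≤ ε; i.e., β_ω and γ_ω are the least such elements extending β and γ with equal meets with α. -/
/-- The iterated pair construction: `(iterSeq α β γ n).1 = βₙ` and
`(iterSeq α β γ n).2 = γₙ`, where `β₀ = β`, `γ₀ = γ`,
`β_{n+1} = β ⊔ (α ⊓ γₙ)`, `γ_{n+1} = γ ⊔ (α ⊓ βₙ)`. -/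
def iterSeq {L : Type*} [CompleteLattice L] (α β γ : L) : ℕ → L × L
  | 0 => (β, γ)
  | n + 1 => (β ⊔ (α ⊓ (iterSeq α β γ n).2), γ ⊔ (α ⊓ (iterSeq α β γ n).1))

/-- `β_ω = ⨆ₙ βₙ`. -/
noncomputable def betaOmega {L : Type*} [CompleteLattice L] (α β γ : L) : L :=
  ⨆ n, (iterSeq α β γ n).1

/-- `γ_ω = ⨆ₙ γₙ`. -/
noncomputable def gammaOmega {L : Type*} [CompleteLattice L] (α β γ : L) : L :=
  ⨆ n, (iterSeq α β γ n).2

theorem inf_le_of_le_of_inf_eq {L : Type*} [SemilatticeInf L] {a x d e : L}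
    (hxe : x ≤ e) (hde : a ⊓ d = a ⊓ e) : a ⊓ x ≤ d :=
  calc a ⊓ x ≤ a ⊓ e := inf_le_inf_left a hxe
    _ = a ⊓ d := hde.symm
    _ ≤ d := inf_le_right

theorem iterSeq_le_of_inf_eq {L : Type*} [CompleteLattice L] {α β γ δ ε : L}
    (hβδ : β ≤ δ) (hγε : γ ≤ ε) (hδε : α ⊓ δ = α ⊓ ε) :
    ∀ n, (iterSeq α β γ n).1 ≤ δ ∧ (iterSeq α β γ n).2 ≤ ε
  | 0 => ⟨hβδ, hγε⟩
  | n + 1 =>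
    have ih := iterSeq_le_of_inf_eq hβδ hγε hδε n
    ⟨sup_le hβδ (inf_le_of_le_of_inf_eq ih.2 hδε),
      sup_le hγε (inf_le_of_le_of_inf_eq ih.1 hδε.symm)⟩

theorem stmt_3_general {L : Type*} [CompleteLattice L] (α β γ δ ε : L)
    (hβδ : β ≤ δ) (hγε : γ ≤ ε) (hδε : α ⊓ δ = α ⊓ ε) :
    betaOmega α β γ ≤ δ ∧ gammaOmega α β γ ≤ ε :=
  ⟨iSup_le fun n => (iterSeq_le_of_inf_eq hβδ hγε hδε n).1,
    iSup_le fun n => (iterSeq_le_of_inf_eq hβδ hγε hδε n).2⟩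

theorem stmt_3 {L : Type*} [CompleteLattice L] (α β γ δ ε : L)
    (hdist : ∀ f : ℕ → L, Monotone f → α ⊓ (⨆ n, f n) = ⨆ n, α ⊓ f n)
    (hβδ : β ≤ δ) (hγε : γ ≤ ε) (hδε : α ⊓ δ = α ⊓ ε) :
    betaOmega α β γ ≤ δ ∧ gammaOmega α β γ ≤ ε :=
  stmt_3_general α β γ δ ε hβδ hγε hδε
end

section
/- With the relations →_k and ⇒_{k,n} on 2-element subsets of an algebra A defined via translations, if {a,b} ⇒_{k,m} {c,d} and {c,d} ⇒_{ℓ,n} {r,s}, then {a,b} ⇒_{k+ℓ, m·n} {r,s}. -/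
/-! An algebra is a type `A` with a family of finitary operations
`op i : (Fin (ar i) → A) → A` indexed by `i : ι`. -/

section Algebra

variable {A : Type*} {ι : Type*} {ar : ι → ℕ}

/-- A binary relation on `A` is compatible with the operations. -/
def IsCompatible (op : ∀ i, (Fin (ar i) → A) → A) (θ : A → A → Prop) : Prop :=
  ∀ i (f g : Fin (ar i) → A), (∀ j, θ (f j) (g j)) → θ (op i f) (op i g)

/-- A congruence of the algebra: a compatible equivalence relation. -/
def IsCong (op : ∀ i, (Fin (ar i) → A) → A) (θ : A → A → Prop) : Prop :=
  Equivalence θ ∧ IsCompatible op θ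

/-- `Cg op a b` is the principal congruence generated by the pair `(a, b)`:
the smallest congruence containing it. -/
def Cg (op : ∀ i, (Fin (ar i) → A) → A) (a b : A) : A → A → Prop :=
  fun x y => ∀ θ : A → A → Prop, IsCong op θ → θ a b → θ x y

/-- A basic translation: a fundamental operation with all but one argument fixed. -/
def IsBasicTranslation (op : ∀ i, (Fin (ar i) → A) → A) (f : A → A) : Prop :=
  ∃ (i : ι) (j : Fin (ar i)) (p : Fin (ar i) → A),
    f = fun x => op i (Function.update p j x)

/-- `IsTranslation op k f`: `f` is a `k`-translation, i.e. a composition of at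
most `k` basic translations (the identity is the unique `0`-translation). -/
inductive IsTranslation (op : ∀ i, (Fin (ar i) → A) → A) : ℕ → (A → A) → Prop
  | id : IsTranslation op 0 id
  | mono {k f} : IsTranslation op k f → IsTranslation op (k + 1) f
  | comp {k f g} : IsBasicTranslation op g → IsTranslation op k f →
      IsTranslation op (k + 1) (g ∘ f)

/-- `{a, b} →ₖ {c, d}`: some `k`-translation maps `{a, b}` onto `{c, d}`. -/
def TrArrow (op : ∀ i, (Fin (ar i) → A) → A) (k : ℕ) (a b c d : A) : Prop :=
  ∃ f : A → A, IsTranslation op k f ∧ ({f a, f b} : Set A) = {c, d}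

/-- `{a, b} ⇒_{k,n} {c, d}`: there is a chain `c = c₀, c₁, …, cₙ = d` in which
each link is trivial or the image of `{a, b}` under a `k`-translation. -/
def TrChain (op : ∀ i, (Fin (ar i) → A) → A) (k n : ℕ) (a b c d : A) : Prop :=
  ∃ e : Fin (n + 1) → A, e 0 = c ∧ e (Fin.last n) = d ∧
    ∀ i : Fin n, e i.castSucc = e i.succ ∨ TrArrow op k a b (e i.castSucc) (e i.succ)

/-- `{a, b} ⇒ₖ {c, d}`: `{a, b} ⇒_{k,n} {c, d}` for some `n`. -/
def TrReach (op : ∀ i, (Fin (ar i) → A) → A) (k : ℕ) (a b c d : A) : Prop :=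
  ∃ n : ℕ, TrChain op k n a b c d

/-- Chains witnessing `{a, b} ⇒_{k,n} {c, d}` are the `RelSeries` of this relation. -/
def trLink (op : ∀ i, (Fin (ar i) → A) → A) (k : ℕ) (a b : A) : SetRel A A :=
  {p | p.1 = p.2 ∨ TrArrow op k a b p.1 p.2}

variable {op : ∀ i, (Fin (ar i) → A) → A} {k ℓ m n : ℕ} {a b c d x y z : A}

theorem trChain_iff_exists_relSeries :
    TrChain op k n a b c d ↔
      ∃ p : RelSeries (trLink op k a b), p.length = n ∧ p.head = c ∧ p.last = d := by
  constructor
  · rintro ⟨e, h0, hl, hlink⟩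
    exact ⟨⟨n, e, hlink⟩, rfl, h0, hl⟩
  · rintro ⟨p, rfl, rfl, rfl⟩
    exact ⟨p, rfl, rfl, p.step⟩

theorem IsTranslation.comp_isTranslation {f g : A → A} (hf : IsTranslation op ℓ f)
    (hg : IsTranslation op k g) : IsTranslation op (k + ℓ) (f ∘ g) := by
  induction hf with
  | id => exact hg
  | mono _ ih => exact ih.mono
  | comp hb _ ih =>
    rw [Function.comp_assoc]
    exact ih.comp hb

theorem TrArrow.symm (h : TrArrow op k a b x y) : TrArrow op k a b y x := by
  obtain ⟨f, hf, hab⟩ := h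
  exact ⟨f, hf, hab.trans (Set.pair_comm x y)⟩

theorem TrArrow.map {f : A → A} (hf : IsTranslation op ℓ f) (h : TrArrow op k a b x y) :
    TrArrow op (k + ℓ) a b (f x) (f y) := by
  obtain ⟨t, ht, hab⟩ := h
  refine ⟨f ∘ t, hf.comp_isTranslation ht, ?_⟩
  simpa only [Set.image_pair, Function.comp_apply] using congrArg (f '' ·) hab

theorem trLink_inv_le : (trLink op k a b).inv ≤ trLink op k a b := by
  rintro ⟨x, y⟩ (hxy | hxy)
  · exact Or.inl hxy.symm
  · exact Or.inr hxy.symm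

def trLinkHom {f : A → A} (hf : IsTranslation op ℓ f) :
    (trLink op k a b).Hom (trLink op (k + ℓ) a b) :=
  ⟨f, fun hxy => hxy.imp (congrArg f) (TrArrow.map hf)⟩

theorem trChain_self (k n : ℕ) (a b x : A) : TrChain op k n a b x x :=
  ⟨fun _ => x, rfl, rfl, fun _ => Or.inl rfl⟩

theorem TrChain.symm (h : TrChain op k n a b c d) : TrChain op k n a b d c := by
  obtain ⟨p, rfl, rfl, rfl⟩ := trChain_iff_exists_relSeries.mp h
  exact trChain_iff_exists_relSeries.mpr
    ⟨p.reverse.ofLE trLink_inv_le, rfl, p.head_reverse, p.last_reverse⟩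

theorem TrChain.trans (h₁ : TrChain op k m a b x y) (h₂ : TrChain op k n a b y z) :
    TrChain op k (m + n) a b x z := by
  obtain ⟨p, rfl, rfl, rfl⟩ := trChain_iff_exists_relSeries.mp h₁
  obtain ⟨q, rfl, hq, rfl⟩ := trChain_iff_exists_relSeries.mp h₂
  exact trChain_iff_exists_relSeries.mpr
    ⟨p.smash q hq.symm, rfl, RelSeries.head_smash _, RelSeries.last_smash _⟩

theorem TrChain.map {f : A → A} (hf : IsTranslation op ℓ f) (h : TrChain op k m a b c d) :
    TrChain op (k + ℓ) m a b (f c) (f d) := by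
  obtain ⟨p, rfl, rfl, rfl⟩ := trChain_iff_exists_relSeries.mp h
  exact trChain_iff_exists_relSeries.mpr ⟨p.map (trLinkHom hf), rfl, rfl, rfl⟩

theorem TrChain.map_trLink (h : TrChain op k m a b c d) (hxy : (x, y) ∈ trLink op ℓ c d) :
    TrChain op (k + ℓ) m a b x y := by
  rcases hxy with hxy | ⟨f, hf, hcd⟩
  · obtain rfl : x = y := hxy
    exact trChain_self _ _ _ _ _
  · rcases Set.pair_eq_pair_iff.mp hcd with ⟨rfl, rfl⟩ | ⟨rfl, rfl⟩
    · exact h.map hf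
    · exact (h.map hf).symm

/-- Each link of `q` is replaced by the image of the chain `{a, b} ⇒_{k,m} {c, d}` under the
translation producing that link. -/
theorem TrChain.relSeries_trLink (h : TrChain op k m a b c d)
    (q : RelSeries (trLink op ℓ c d)) :
    TrChain op (k + ℓ) (m * q.length) a b q.head q.last := by
  induction q using RelSeries.inductionOn' with
  | singleton x => exact trChain_self _ _ _ _ _
  | snoc q x hx ih =>
    simpa only [RelSeries.snoc_length, RelSeries.head_snoc, RelSeries.last_snoc, mul_add_one]
      using ih.trans (h.map_trLink hx)

end Algebra
theorem stmt_7 {A : Type*} {ι : Type*} {ar : ι → ℕ}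
    (op : ∀ i, (Fin (ar i) → A) → A) (k ℓ m n : ℕ) (a b c d r s : A)
    (h₁ : TrChain op k m a b c d) (h₂ : TrChain op ℓ n c d r s) :
    TrChain op (k + ℓ) (m * n) a b r s := by
  obtain ⟨q, rfl, rfl, rfl⟩ := trChain_iff_exists_relSeries.mp h₂
  exact h₁.relSeries_trLink q
end

section
/- Suppose an algebra A has the property that for any two 2-element subsets P, Q of A there exists a 2-element subset R with P ⇒_ℓ R and Q ⇒_ℓ R (for a fixed ℓ). Then for any finite set S of 2-element subsets with |S| ≤ 2^k, there exists a 2-element subset {u,v} such that P ⇒_{ℓk} {u,v} for every P ∈ S. -/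
section Aux

variable {A : Type*} {ι : Type*} {ar : ι → ℕ} {op : ∀ i, (Fin (ar i) → A) → A}

lemma isTranslation_mono' {k k' : ℕ} {f : A → A} (h : IsTranslation op k f)
    (hk : k ≤ k') : IsTranslation op k' f := by
  induction hk with
  | refl => exact h
  | step _ ih => exact ih.mono

lemma isTranslation_comp {j k : ℕ} {f g : A → A} (hf : IsTranslation op j f)
    (hg : IsTranslation op k g) : IsTranslation op (j + k) (f ∘ g) := by
  induction hf with
  | id => simpa using isTranslation_mono' hg (Nat.le_add_left k 0)
  | mono _ ih => exact (Nat.succ_add _ _) ▸ ih.mono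
  | @comp k₁ f₁ g₁ hb _ ih =>
    have h2 := IsTranslation.comp hb ih
    have heq : g₁ ∘ (f₁ ∘ g) = (g₁ ∘ f₁) ∘ g := rfl
    rw [heq] at h2
    exact (Nat.succ_add k₁ k) ▸ h2

lemma trArrow_symm {k : ℕ} {a b c d : A} (h : TrArrow op k a b c d) :
    TrArrow op k a b d c := by
  obtain ⟨f, hf, hset⟩ := h
  exact ⟨f, hf, by rw [hset, Set.pair_comm]⟩

lemma trArrow_mono {k k' : ℕ} {a b c d : A} (hk : k ≤ k')
    (h : TrArrow op k a b c d) : TrArrow op k' a b c d := by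
  obtain ⟨f, hf, hset⟩ := h
  exact ⟨f, isTranslation_mono' hf hk, hset⟩

lemma trReach_iff {k : ℕ} {a b c d : A} :
    TrReach op k a b c d ↔ Relation.ReflTransGen (TrArrow op k a b) c d := by
  constructor
  · rintro ⟨n, e, h0, hl, hlink⟩
    induction n generalizing d with
    | zero => rw [← h0, ← hl]; rfl
    | succ n ih =>
      have mid : Relation.ReflTransGen (TrArrow op k a b) c (e (Fin.last n).castSucc) := by
        refine ih (fun i => e i.castSucc) (by simpa using h0) rfl ?_
        intro i
        have h := hlink i.castSucc
        rw [Fin.succ_castSucc] at h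
        exact h
      have step := hlink (Fin.last n)
      rw [Fin.succ_last] at step
      rw [← hl]
      rcases step with h | h
      · rw [← h]; exact mid
      · exact mid.tail h
  · intro h
    induction h with
    | refl => exact ⟨0, fun _ => c, rfl, rfl, fun i => i.elim0⟩
    | @tail x y _ hxy ih =>
      obtain ⟨n, e, h0, hl, hlink⟩ := ih
      refine ⟨n + 1, Fin.snoc e y, ?_, by simp, ?_⟩
      · rw [show (0 : Fin (n + 1 + 1)) = (0 : Fin (n + 1)).castSucc from rfl,
          Fin.snoc_castSucc]
        exact h0
      intro i
      induction i using Fin.lastCases with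
      | last =>
        right
        rw [Fin.succ_last, Fin.snoc_last, Fin.snoc_castSucc, hl]
        exact hxy
      | cast j =>
        have h := hlink j
        rw [Fin.succ_castSucc, Fin.snoc_castSucc, Fin.snoc_castSucc]
        exact h

lemma trReach_self {k : ℕ} {a b : A} : TrReach op k a b a b :=
  trReach_iff.mpr (Relation.ReflTransGen.single
    ⟨id, isTranslation_mono' IsTranslation.id (Nat.zero_le k), rfl⟩)

lemma trReach_symm {k : ℕ} {a b c d : A} (h : TrReach op k a b c d) :
    TrReach op k a b d c := by
  rw [trReach_iff] at h ⊢
  induction h with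
  | refl => exact .refl
  | tail _ hxy ih => exact Relation.ReflTransGen.head (trArrow_symm hxy) ih

lemma trReach_mono {k k' : ℕ} {a b c d : A} (hk : k ≤ k')
    (h : TrReach op k a b c d) : TrReach op k' a b c d := by
  rw [trReach_iff] at h ⊢
  exact Relation.ReflTransGen.mono (fun _ _ => trArrow_mono hk) _ _ h

lemma trReach_map {j k : ℕ} {a b c d : A} {f : A → A}
    (hf : IsTranslation op k f) (h : TrReach op j a b c d) :
    TrReach op (j + k) a b (f c) (f d) := by
  rw [trReach_iff] at h ⊢
  induction h with
  | refl => exact .refl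
  | @tail x y _ hxy ih =>
    refine ih.tail ?_
    obtain ⟨g, hg, hset⟩ := hxy
    refine ⟨f ∘ g, ?_, ?_⟩
    · have h2 := isTranslation_comp hf hg
      rwa [Nat.add_comm] at h2
    · show ({f (g a), f (g b)} : Set A) = {f x, f y}
      rw [← Set.image_pair, hset, Set.image_pair]

lemma trReach_trans {j k : ℕ} {a b c d r s : A}
    (h1 : TrReach op j a b c d) (h2 : TrReach op k c d r s) :
    TrReach op (j + k) a b r s := by
  rw [trReach_iff] at h2 ⊢
  induction h2 with
  | refl => exact .refl
  | @tail x y _ hxy ih =>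
    refine ih.trans ?_
    obtain ⟨f, hf, hset⟩ := hxy
    have hfd : Relation.ReflTransGen (TrArrow op (j + k) a b) (f c) (f d) :=
      trReach_iff.mp (trReach_map hf h1)
    rcases Set.pair_eq_pair_iff.mp hset with ⟨h1', h2'⟩ | ⟨h1', h2'⟩
    · rw [← h1', ← h2']; exact hfd
    · rw [← h1', ← h2']
      exact trReach_iff.mp (trReach_symm (trReach_iff.mpr hfd))

end Aux

theorem stmt_9 {A : Type*} {ι : Type*} {ar : ι → ℕ}
    (op : ∀ i, (Fin (ar i) → A) → A) (ℓ : ℕ)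
    (hpair : ∀ a b c d : A, a ≠ b → c ≠ d →
      ∃ u v : A, u ≠ v ∧ TrReach op ℓ a b u v ∧ TrReach op ℓ c d u v)
    (k : ℕ) (S : Finset (A × A)) (hS : S.Nonempty)
    (hcard : S.card ≤ 2 ^ k) (hne : ∀ p ∈ S, p.1 ≠ p.2) :
    ∃ u v : A, u ≠ v ∧ ∀ p ∈ S, TrReach op (ℓ * k) p.1 p.2 u v := by
  classical
  induction k generalizing S with
  | zero =>
    obtain ⟨p, hp⟩ := Finset.card_eq_one.mp
      (le_antisymm (by simpa using hcard) (Finset.one_le_card.mpr hS))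
    refine ⟨p.1, p.2, hne p (by simp [hp]), ?_⟩
    intro q hq
    rw [hp, Finset.mem_singleton] at hq
    subst hq
    exact trReach_self
  | succ k ih =>
    by_cases hle : S.card ≤ 2 ^ k
    · obtain ⟨u, v, huv, hall⟩ := ih S hS hle hne
      exact ⟨u, v, huv, fun p hp => trReach_mono
        (Nat.mul_le_mul_left ℓ (Nat.le_succ k)) (hall p hp)⟩
    · push_neg at hle
      obtain ⟨S1, hS1sub, hS1card⟩ :=
        Finset.exists_subset_card_eq (show 2 ^ k ≤ S.card from le_of_lt hle)
      set S2 := S \ S1 with hS2def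
      have hS1ne : S1.Nonempty := Finset.card_pos.mp (by rw [hS1card]; positivity)
      have hS2ne : S2.Nonempty := by
        rw [← Finset.card_pos, Finset.card_sdiff_of_subset hS1sub, hS1card]
        omega
      have hS2card : S2.card ≤ 2 ^ k := by
        rw [Finset.card_sdiff_of_subset hS1sub, hS1card]
        have h1 : S.card ≤ 2 ^ (k + 1) := hcard
        have h2 : (2 : ℕ) ^ (k + 1) = 2 ^ k + 2 ^ k := by ring
        omega
      obtain ⟨u1, v1, huv1, hall1⟩ := ih S1 hS1ne (le_of_eq hS1card)
        (fun p hp => hne p (hS1sub hp))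
      obtain ⟨u2, v2, huv2, hall2⟩ := ih S2 hS2ne hS2card
        (fun p hp => hne p (Finset.mem_sdiff.mp hp).1)
      obtain ⟨u, v, huv, hr1, hr2⟩ := hpair u1 v1 u2 v2 huv1 huv2
      refine ⟨u, v, huv, ?_⟩
      intro p hp
      have key : ℓ * k + ℓ = ℓ * (k + 1) := by ring
      by_cases h1 : p ∈ S1
      · exact key ▸ trReach_trans (hall1 p h1) hr1
      · have h2 : p ∈ S2 := Finset.mem_sdiff.mpr ⟨hp, h1⟩
        exact key ▸ trReach_trans (hall2 p h2) hr2
end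

section
/- Let V be a variety (or even just a class of algebras closed under nothing in particular) possessing a finite family of pairs of ternary terms {(s_p, t_p) : p ∈ T} such that every A ∈ V satisfies s_p(x,y,x) = t_p(x,y,x) for all p, and satisfies: x = y iff for every p ∈ T, (s_p(x,x,y) = t_p(x,x,y) ↔ s_p(x,y,y) = t_p(x,y,y)). Then for every A ∈ V and every finite sequence a₀, a₁, …, aₙ in A with a₀ ≠ aₙ, there exists i < n with Cg(a₀,aₙ) ∩ Cg(aᵢ,a_{i+1}) ≠ the trivial congruence. -/
section TermOps

variable {A : Type*} {ι : Type*} {ar : ι → ℕ}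

/-- Ternary term operations of the algebra: built from projections by
applying fundamental operations. -/
inductive IsTermOp3 (op : ∀ i, (Fin (ar i) → A) → A) : (A → A → A → A) → Prop
  | proj₁ : IsTermOp3 op fun x _ _ => x
  | proj₂ : IsTermOp3 op fun _ y _ => y
  | proj₃ : IsTermOp3 op fun _ _ z => z
  | app (i : ι) (t : Fin (ar i) → A → A → A → A) :
      (∀ j, IsTermOp3 op (t j)) → IsTermOp3 op (fun x y z => op i fun j => t j x y z)

end TermOps

section Aux

variable {A : Type*} {ι : Type*} {ar : ι → ℕ}

lemma termOp3_cong (op : ∀ i, (Fin (ar i) → A) → A) {u : A → A → A → A}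
    (hu : IsTermOp3 op u) {θ : A → A → Prop} (hθ : IsCong op θ)
    {x x' y y' z z' : A} (hx : θ x x') (hy : θ y y') (hz : θ z z') :
    θ (u x y z) (u x' y' z') := by
  induction hu with
  | proj₁ => exact hx
  | proj₂ => exact hy
  | proj₃ => exact hz
  | app i tt h ih => exact hθ.2 i _ _ fun j => ih j

lemma find_switch (e : ℕ → Prop) : ∀ n, e 0 → ¬ e n → ∃ i < n, e i ∧ ¬ e (i + 1) := by
  intro n
  induction n with
  | zero => intro h0 hn; exact absurd h0 hn
  | succ m ih =>
    intro h0 hn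
    by_cases hm : e m
    · exact ⟨m, Nat.lt_succ_self m, hm, hn⟩
    · obtain ⟨i, hi, h⟩ := ih h0 hm
      exact ⟨i, Nat.lt_succ_of_lt hi, h⟩

end Aux

theorem stmt_10 {A : Type*} {ι : Type*} {ar : ι → ℕ}
    (op : ∀ i, (Fin (ar i) → A) → A)
    (T : Type*) [Fintype T] (s t : T → A → A → A → A)
    (hs : ∀ p, IsTermOp3 op (s p)) (ht : ∀ p, IsTermOp3 op (t p))
    (h₁ : ∀ p (x y : A), s p x y x = t p x y x)
    (h₂ : ∀ x y : A, x = y ↔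
      ∀ p, (s p x x y = t p x x y ↔ s p x y y = t p x y y))
    (n : ℕ) (a : Fin (n + 1) → A) (hne : a 0 ≠ a (Fin.last n)) :
    ∃ i : Fin n, ∃ c d : A, c ≠ d ∧
      Cg op (a 0) (a (Fin.last n)) c d ∧ Cg op (a i.castSucc) (a i.succ) c d := by

  classical
  set a0 := a 0 with ha0
  set an := a (Fin.last n) with han
  obtain ⟨p, hp⟩ : ∃ p, ¬ (s p a0 a0 an = t p a0 a0 an ↔ s p a0 an an = t p a0 an an) := by
    by_contra h
    push_neg at h
    exact hne ((h₂ a0 an).2 h)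
  -- c j, d j
  set c : Fin (n + 1) → A := fun j => s p a0 (a j) an with hc
  set d : Fin (n + 1) → A := fun j => t p a0 (a j) an with hd
  have fact1 : ∀ j, Cg op a0 an (c j) (d j) := by
    intro j θ hθ h0n
    have hcs : θ (c j) (s p a0 (a j) a0) :=
      termOp3_cong op (hs p) hθ (hθ.1.refl _) (hθ.1.refl _) (hθ.1.symm h0n)
    have hdt : θ (t p a0 (a j) a0) (d j) :=
      termOp3_cong op (ht p) hθ (hθ.1.refl _) (hθ.1.refl _) h0n
    have := h₁ p a0 (a j)
    exact hθ.1.trans hcs (this ▸ hdt)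
  have fact2 : ∀ i j : Fin (n + 1), c j = d j →
      Cg op (a i) (a j) (c i) (d i) := by
    intro i j heq θ hθ hij
    have h1 : θ (c i) (c j) :=
      termOp3_cong op (hs p) hθ (hθ.1.refl _) hij (hθ.1.refl _)
    have h2 : θ (d j) (d i) :=
      termOp3_cong op (ht p) hθ (hθ.1.refl _) (hθ.1.symm hij) (hθ.1.refl _)
    exact hθ.1.trans h1 (heq ▸ h2)
  -- the proposition along the chain
  set P : ℕ → Prop := fun k => c ⟨min k n, Nat.lt_succ_of_le (Nat.min_le_right k n)⟩ =
      d ⟨min k n, Nat.lt_succ_of_le (Nat.min_le_right k n)⟩ with hP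
  have hP0 : P 0 ↔ (s p a0 a0 an = t p a0 a0 an) := by
    simp only [hP, Nat.zero_min, hc, hd]
    have : (⟨0, Nat.lt_succ_of_le (Nat.zero_le n)⟩ : Fin (n + 1)) = 0 := rfl
    rw [this]
  have hPn : P n ↔ (s p a0 an an = t p a0 an an) := by
    simp only [hP, Nat.min_self, hc, hd]
    have : (⟨n, Nat.lt_succ_of_le le_rfl⟩ : Fin (n + 1)) = Fin.last n := rfl
    rw [this]
  have key : ∀ i : Fin n, (c i.castSucc = d i.castSucc ∧ c i.succ ≠ d i.succ) ∨
      (c i.castSucc ≠ d i.castSucc ∧ c i.succ = d i.succ) → True := fun _ _ => trivial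
  rw [not_iff] at hp
  have main : ∃ i : Fin n, (c i.castSucc = d i.castSucc ∧ c i.succ ≠ d i.succ) ∨
      (c i.castSucc ≠ d i.castSucc ∧ c i.succ = d i.succ) := by
    rcases iff_iff_and_or_not_and_not.1 hp with ⟨h0', hn''⟩ | ⟨h0'', hn'⟩
    case inr =>
      have h0 := not_not.1 h0''
      have e0 : P 0 := hP0.2 h0
      have en : ¬ P n := fun h => hn' (hPn.1 h)
      obtain ⟨i, hin, hi, hi1⟩ := find_switch P n e0 en
      refine ⟨⟨i, hin⟩, Or.inl ⟨?_, ?_⟩⟩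
      · have : min i n = i := Nat.min_eq_left (Nat.le_of_lt hin)
        simpa only [hP, this, Fin.castSucc_mk] using hi
      · have : min (i + 1) n = i + 1 := Nat.min_eq_left hin
        simpa only [hP, this, Fin.succ_mk, ne_eq] using hi1
    case inl =>
      have e0 : ¬ P 0 := fun h => h0' (hP0.1 h)
      have en : P n := hPn.2 hn''
      obtain ⟨i, hin, hi, hi1⟩ := find_switch (fun k => ¬ P k) n e0 (not_not.2 en)
      refine ⟨⟨i, hin⟩, Or.inr ⟨?_, ?_⟩⟩
      · have : min i n = i := Nat.min_eq_left (Nat.le_of_lt hin)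
        simpa only [hP, this, Fin.castSucc_mk, ne_eq] using hi
      · have heq : min (i + 1) n = i + 1 := Nat.min_eq_left hin
        have := not_not.1 hi1
        simpa only [hP, heq, Fin.succ_mk] using this
  obtain ⟨i, hcase⟩ := main
  rcases hcase with ⟨heq, hne'⟩ | ⟨hne', heq⟩
  · refine ⟨i, c i.succ, d i.succ, hne', fact1 _, ?_⟩
    intro θ hθ hlink
    exact fact2 i.succ i.castSucc heq θ hθ (hθ.1.symm hlink)
  · refine ⟨i, c i.castSucc, d i.castSucc, hne', fact1 _, ?_⟩
    exact fact2 i.castSucc i.succ heq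
end

section
/- Let A be an algebra with the property: for every finite sequence a₀, …, aₙ ∈ A with a₀ ≠ aₙ there exists i < n such that Cg(a₀,aₙ) ⊓ Cg(aᵢ,a_{i+1}) ≠ 0_A. Then for all congruences α, β, γ of A with α ⊓ β = 0_A and α ⊓ γ = 0_A, we have α ⊓ (β ∨ γ) = 0_A. -/
/-- The join of β and γ in the congruence lattice: the smallest congruence
containing both relations. -/
def CongJoin {A : Type*} {ι : Type*} {ar : ι → ℕ}
    (op : ∀ i, (Fin (ar i) → A) → A) (β γ : A → A → Prop) : A → A → Prop :=
  fun x y => ∀ θ : A → A → Prop, IsCong op θ →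
    (∀ u v, β u v → θ u v) → (∀ u v, γ u v → θ u v) → θ x y

section Aux

variable {A : Type*} {ι : Type*} {ar : ι → ℕ}

/-- The transitive-reflexive closure of β ∪ γ. -/
def RJoin (β γ : A → A → Prop) : A → A → Prop :=
  Relation.ReflTransGen (fun x y => β x y ∨ γ x y)

lemma rjoin_update (op : ∀ i, (Fin (ar i) → A) → A) {β γ : A → A → Prop}
    (hβ : IsCong op β) (hγ : IsCong op γ)
    (i : ι) (p : Fin (ar i) → A) (j : Fin (ar i)) {x y : A}
    (h : RJoin β γ x y) :
    RJoin β γ (op i (Function.update p j x)) (op i (Function.update p j y)) := by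
  induction h with
  | refl => exact Relation.ReflTransGen.refl
  | tail _ hbc ih =>
    refine ih.tail ?_
    rcases hbc with hbc | hbc
    · left
      apply hβ.2
      intro j'
      rcases eq_or_ne j' j with rfl | hne
      · simpa using hbc
      · simp [Function.update_of_ne hne, hβ.1.refl]
    · right
      apply hγ.2
      intro j'
      rcases eq_or_ne j' j with rfl | hne
      · simpa using hbc
      · simp [Function.update_of_ne hne, hγ.1.refl]

lemma rjoin_cong (op : ∀ i, (Fin (ar i) → A) → A) {β γ : A → A → Prop}
    (hβ : IsCong op β) (hγ : IsCong op γ) : IsCong op (RJoin β γ) := by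
  constructor
  · constructor
    · intro x; exact Relation.ReflTransGen.refl
    · intro x y h
      induction h with
      | refl => exact Relation.ReflTransGen.refl
      | tail _ hbc ih =>
        refine Relation.ReflTransGen.trans ?_ ih
        refine Relation.ReflTransGen.single ?_
        rcases hbc with h | h
        · exact Or.inl (hβ.1.symm h)
        · exact Or.inr (hγ.1.symm h)
    · intro x y z h1 h2; exact h1.trans h2
  · intro i f g hfg
    -- change coordinates one at a time
    have key : ∀ k : ℕ, k ≤ ar i →
        RJoin β γ (op i f) (op i (fun j => if j.val < k then g j else f j)) := by
      intro k hk
      induction k with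
      | zero => simp only [Nat.not_lt_zero, if_false]; exact Relation.ReflTransGen.refl
      | succ m ihm =>
        have hm : m ≤ ar i := Nat.le_of_succ_le hk
        have hmlt : m < ar i := hk
        refine (ihm hm).trans ?_
        set jm : Fin (ar i) := ⟨m, hmlt⟩
        have h1 : (fun j : Fin (ar i) => if j.val < m then g j else f j)
            = Function.update (fun j : Fin (ar i) => if j.val < m + 1 then g j else f j) jm (f jm) := by
          funext j
          rcases eq_or_ne j jm with rfl | hne
          · simp [jm]
          · have hv : j.val ≠ m := fun h => hne (Fin.ext h)
            rw [Function.update_of_ne hne]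
            rcases Nat.lt_or_ge j.val m with h | h
            · simp [h, Nat.lt_succ_of_lt h]
            · have h1 : ¬ j.val < m := Nat.not_lt.mpr h
              have h2 : ¬ j.val < m + 1 := by omega
              simp [h1, h2]
        have h2 : (fun j : Fin (ar i) => if j.val < m + 1 then g j else f j)
            = Function.update (fun j : Fin (ar i) => if j.val < m + 1 then g j else f j) jm (g jm) := by
          funext j
          rcases eq_or_ne j jm with rfl | hne
          · simp [jm]
          · rw [Function.update_of_ne hne]
        have step := rjoin_update op hβ hγ i
          (fun j : Fin (ar i) => if j.val < m + 1 then g j else f j) jm (hfg jm)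
        rw [← h1, ← h2] at step
        exact step
    have := key (ar i) le_rfl
    have hg : (fun j : Fin (ar i) => if j.val < ar i then g j else f j) = g := by
      funext j; simp [j.isLt]
    rwa [hg] at this

lemma rjoin_chain {β γ : A → A → Prop} {x y : A} (h : RJoin β γ x y) :
    ∃ n : ℕ, ∃ e : Fin (n + 1) → A, e 0 = x ∧ e (Fin.last n) = y ∧
      ∀ i : Fin n, β (e i.castSucc) (e i.succ) ∨ γ (e i.castSucc) (e i.succ) := by
  induction h with
  | refl =>
    exact ⟨0, fun _ => x, rfl, rfl, fun i => i.elim0⟩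
  | @tail b c _ hbc ih =>
    obtain ⟨n, e, he0, heL, hstep⟩ := ih
    refine ⟨n + 1, Fin.snoc e c, ?_, ?_, ?_⟩
    · rw [show (0 : Fin (n + 2)) = Fin.castSucc 0 by rfl, Fin.snoc_castSucc]
      exact he0
    · simp
    · intro i
      refine Fin.lastCases ?_ ?_ i
      · rw [show (Fin.last n).castSucc = Fin.castSucc (Fin.last n) by rfl,
          Fin.snoc_castSucc, show (Fin.last n).succ = Fin.last (n + 1) by rfl,
          Fin.snoc_last, heL]
        exact hbc
      · intro j
        rw [show (j.castSucc).castSucc = Fin.castSucc j.castSucc by rfl,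
          Fin.snoc_castSucc, show (j.castSucc).succ = Fin.castSucc j.succ from
            Fin.succ_castSucc j, Fin.snoc_castSucc]
        exact hstep j

end Aux

theorem stmt_11 {A : Type*} {ι : Type*} {ar : ι → ℕ}
    (op : ∀ i, (Fin (ar i) → A) → A)
    (hchain : ∀ (n : ℕ) (a : Fin (n + 1) → A), a 0 ≠ a (Fin.last n) →
      ∃ i : Fin n, ∃ c d : A, c ≠ d ∧
        Cg op (a 0) (a (Fin.last n)) c d ∧ Cg op (a i.castSucc) (a i.succ) c d)
    (α β γ : A → A → Prop)
    (hα : IsCong op α) (hβ : IsCong op β) (hγ : IsCong op γ)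
    (hαβ : ∀ x y, α x y → β x y → x = y)
    (hαγ : ∀ x y, α x y → γ x y → x = y) :
    ∀ x y, α x y → CongJoin op β γ x y → x = y := by
  intro x y hxy hjoin
  by_contra hne
  have hR : RJoin β γ x y :=
    hjoin (RJoin β γ) (rjoin_cong op hβ hγ)
      (fun u v h => Relation.ReflTransGen.single (Or.inl h))
      (fun u v h => Relation.ReflTransGen.single (Or.inr h))
  obtain ⟨n, e, he0, heL, hstep⟩ := rjoin_chain hR
  have hne' : e 0 ≠ e (Fin.last n) := by rw [he0, heL]; exact hne
  obtain ⟨i, c, d, hcd, hCg1, hCg2⟩ := hchain n e hne'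
  have hαcd : α c d := by
    refine hCg1 α hα ?_
    rw [he0, heL]; exact hxy
  rcases hstep i with h | h
  · exact hcd (hαβ c d hαcd (hCg2 β hβ h))
  · exact hcd (hαγ c d hαcd (hCg2 γ hγ h))
end
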